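/- arXiv:2405.10724 — 3 statements merged into one kernel-verified Lean document; each statement's English description precedes it below -/
import Mathlib

section
/- Let K be an algebraically closed field and F = K(x). Let S be a finite-dimensional K-subspace of F of dimension n, let v be one of the valuations v_α (α ∈ K) or v_∞, and let S_1 ⊂ … ⊂ S_n be the natural filtration of S with respect to v, with combinatorial genii γ_i. Then for every 2 ≤ i ≤ n one has dim_K S_i² ≥ dim_K S_{i−1}² + 2, and consequently γ_{i−1} ≤ γ_i; in particular γ_i ≤ γ_j whenever 1 ≤ i ≤ j ≤ n. -/
open Polynomial

noncomputable section

namespace FFF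

variable {K : Type*} [Field K] [IsAlgClosed K]

/-- Valuation of a rational function at the finite place `x - α`
(order of vanishing at `x - α`). -/
def vA (α : K) (f : RatFunc K) : ℤ :=
  (Polynomial.rootMultiplicity α f.num : ℤ) - (Polynomial.rootMultiplicity α f.denom : ℤ)

/-- Valuation of a rational function at the place at infinity:
`deg (denominator) - deg (numerator)`. -/
def vInf (f : RatFunc K) : ℤ := -f.intDegree

/-- The places of `K(x)`: `some α` is the finite place at `α ∈ K`, `none` is the
place at infinity; `plval p` is the associated valuation. -/
def plval (p : Option K) (f : RatFunc K) : ℤ :=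
  Option.elim p (vInf f) (fun α => vA α f)

/-- The degree of a rational function, `deg f = -v∞(f)`. -/
def fdeg (f : RatFunc K) : ℤ := f.intDegree

/-- A divisor on `K(x)`: an integer for every place, zero for all but finitely many. -/
abbrev Divisor (K : Type*) [Field K] := Option K →₀ ℤ

/-- The degree of a divisor: the sum of its values. -/
def divDeg (D : Divisor K) : ℤ := D.sum fun _ n => n

/-- The Riemann–Roch space `L(D)` of a divisor `D`. -/
def RRset (D : Divisor K) : Set (RatFunc K) :=
  {f | f = 0 ∨ ∀ p : Option K, -(D p) ≤ plval p f}

/-- The subfield `K(T)` of `K(x)` generated by the constants `K` and a set `T`. -/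
def Kgen (T : Set (RatFunc K)) : Subfield (RatFunc K) :=
  Subfield.closure ((Set.range fun a : K => (RatFunc.C a : RatFunc K)) ∪ T)

/-- The combinatorial genus `γ = dim S² - 2 dim S + 1` of a subspace `S`. -/
def cgenus (S : Submodule K (RatFunc K)) : ℤ :=
  (Module.finrank K ↥(S * S) : ℤ) - 2 * (Module.finrank K ↥S : ℤ) + 1

/-- `sfil e i` is the `i`-th step (1-indexed) of the natural filtration attached to a
filtered basis `e`: the span of the first `i` basis vectors. -/
def sfil {n : ℕ} (e : Fin n → RatFunc K) (i : ℕ) : Submodule K (RatFunc K) :=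
  Submodule.span K (e '' {j | (j : ℕ) < i})

/-- `e` is a filtered basis of `S` with respect to the valuation `v`:
a basis of `S` with strictly decreasing valuations. -/
def IsFilteredBasis {n : ℕ} (v : RatFunc K → ℤ) (S : Submodule K (RatFunc K))
    (e : Fin n → RatFunc K) : Prop :=
  LinearIndependent K e ∧ Submodule.span K (Set.range e) = S ∧
    StrictAnti fun i => v (e i)

/-- `D` is the divisor of least degree with `S ⊆ L(D)`, i.e.
`D(P) = -min {v_P s : s ∈ S, s ≠ 0}` for every place `P`. -/
def IsMinDivisor (S : Submodule K (RatFunc K)) (D : Divisor K) : Prop :=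
  ∀ p : Option K, IsLeast {d : ℤ | ∃ s ∈ S, s ≠ 0 ∧ plval p s = d} (-(D p))



set_option linter.unusedSectionVars false
open scoped Pointwise

lemma vA_eq_of_eq_div {α : K} {f : RatFunc K} {P Q : K[X]} (hP : P ≠ 0) (hQ : Q ≠ 0)
    (h : f = algebraMap K[X] (RatFunc K) P / algebraMap K[X] (RatFunc K) Q) :
    vA α f = (P.rootMultiplicity α : ℤ) - (Q.rootMultiplicity α : ℤ) := by
  have hf : f ≠ 0 := by
    rw [h]
    exact div_ne_zero (RatFunc.algebraMap_ne_zero hP) (RatFunc.algebraMap_ne_zero hQ)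
  have key : f.num * Q = P * f.denom := by
    apply RatFunc.algebraMap_injective K
    rw [map_mul, map_mul, ← div_eq_div_iff (RatFunc.algebraMap_ne_zero f.denom_ne_zero)
      (RatFunc.algebraMap_ne_zero hQ), RatFunc.num_div_denom]
    exact h
  have h1 : (f.num * Q).rootMultiplicity α = (P * f.denom).rootMultiplicity α := by rw [key]
  rw [Polynomial.rootMultiplicity_mul (mul_ne_zero (RatFunc.num_ne_zero hf) hQ),
    Polynomial.rootMultiplicity_mul (mul_ne_zero hP f.denom_ne_zero)] at h1
  unfold vA
  omega

lemma plval_mul (p : Option K) {f g : RatFunc K} (hf : f ≠ 0) (hg : g ≠ 0) :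
    plval p (f * g) = plval p f + plval p g := by
  cases p with
  | none =>
    show vInf _ = vInf _ + vInf _
    unfold vInf
    rw [RatFunc.intDegree_mul hf hg]; ring
  | some α =>
    show vA α (f * g) = vA α f + vA α g
    have h : f * g =
        algebraMap K[X] (RatFunc K) (f.num * g.num) /
          algebraMap K[X] (RatFunc K) (f.denom * g.denom) := by
      rw [map_mul, map_mul, ← div_mul_div_comm, RatFunc.num_div_denom, RatFunc.num_div_denom]
    rw [vA_eq_of_eq_div (mul_ne_zero (RatFunc.num_ne_zero hf) (RatFunc.num_ne_zero hg))
      (mul_ne_zero f.denom_ne_zero g.denom_ne_zero) h,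
      Polynomial.rootMultiplicity_mul (mul_ne_zero (RatFunc.num_ne_zero hf)
        (RatFunc.num_ne_zero hg)),
      Polynomial.rootMultiplicity_mul (mul_ne_zero f.denom_ne_zero g.denom_ne_zero)]
    unfold vA
    push_cast
    ring

lemma plval_add (p : Option K) {f g : RatFunc K} (hfg : f + g ≠ 0) :
    min (plval p f) (plval p g) ≤ plval p (f + g) := by
  by_cases hf : f = 0
  · subst hf; rw [zero_add]; exact min_le_right _ _
  by_cases hg : g = 0
  · subst hg; rw [add_zero]; exact min_le_left _ _
  cases p with
  | none =>
    have := RatFunc.intDegree_add_le hg hfg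
    show min (vInf f) (vInf g) ≤ vInf (f + g)
    unfold vInf at *
    omega
  | some α =>
    have h : f + g =
        algebraMap K[X] (RatFunc K) (f.num * g.denom + f.denom * g.num) /
          algebraMap K[X] (RatFunc K) (f.denom * g.denom) := by
      rw [map_add, map_mul, map_mul, map_mul, ← div_add_div _ _
        (RatFunc.algebraMap_ne_zero f.denom_ne_zero)
        (RatFunc.algebraMap_ne_zero g.denom_ne_zero),
        RatFunc.num_div_denom, RatFunc.num_div_denom]
    have hN : f.num * g.denom + f.denom * g.num ≠ 0 := by
      intro h0
      apply hfg
      rw [h, h0, map_zero, zero_div]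
    have h1 := Polynomial.rootMultiplicity_add α hN
    have h2 := Polynomial.rootMultiplicity_mul
      (mul_ne_zero (RatFunc.num_ne_zero hf) g.denom_ne_zero) (x := α)
    have h3 := Polynomial.rootMultiplicity_mul
      (mul_ne_zero f.denom_ne_zero (RatFunc.num_ne_zero hg)) (x := α)
    have h4 := Polynomial.rootMultiplicity_mul
      (mul_ne_zero f.denom_ne_zero g.denom_ne_zero) (x := α)
    show min (vA α f) (vA α g) ≤ vA α (f + g)
    rw [vA_eq_of_eq_div hN (mul_ne_zero f.denom_ne_zero g.denom_ne_zero) h, h4]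
    unfold vA
    omega

lemma plval_C (p : Option K) {c : K} (hc : c ≠ 0) : plval p (RatFunc.C c) = 0 := by
  cases p with
  | none => show vInf _ = 0; unfold vInf; rw [RatFunc.intDegree_C]; ring
  | some α =>
    show vA α _ = 0
    unfold vA
    rw [RatFunc.num_C, RatFunc.denom_C]
    rw [Polynomial.rootMultiplicity_eq_zero (by simp [Polynomial.IsRoot, hc]),
      Polynomial.rootMultiplicity_eq_zero (by simp [Polynomial.IsRoot])]
    ring

lemma plval_smul (p : Option K) {c : K} {f : RatFunc K} (hc : c ≠ 0) (hf : f ≠ 0) :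
    plval p (c • f) = plval p f := by
  rw [RatFunc.smul_eq_C_mul, plval_mul p (by
    simpa using (RatFunc.algebraMap_ne_zero (Polynomial.C_ne_zero.mpr hc) : _)) hf,
    plval_C p hc, zero_add]

lemma plval_span_bound (p : Option K) {s : Set (RatFunc K)} {c : ℤ}
    (hs : ∀ x ∈ s, x ≠ 0 ∧ c ≤ plval p x) :
    ∀ y ∈ Submodule.span K s, y ≠ 0 → c ≤ plval p y := by
  intro y hy
  induction hy using Submodule.span_induction with
  | mem x hx => exact fun _ => (hs x hx).2
  | zero => exact fun h0 => absurd rfl h0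
  | add x y hx hy ihx ihy =>
    intro hxy
    by_cases hx0 : x = 0
    · subst hx0; rw [zero_add] at hxy ⊢; exact ihy hxy
    by_cases hy0 : y = 0
    · subst hy0; rw [add_zero] at hxy ⊢; exact ihx hxy
    exact le_trans (le_min (ihx hx0) (ihy hy0)) (plval_add p hxy)
  | smul a x hx ih =>
    intro hax
    have ha : a ≠ 0 := by rintro rfl; simp at hax
    have hx0 : x ≠ 0 := by rintro rfl; simp at hax
    rw [plval_smul p ha hx0]
    exact ih hx0

lemma range_castLE_eq {n i : ℕ} (hin : i ≤ n) (e : Fin n → RatFunc K) :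
    Set.range (e ∘ Fin.castLE hin) = e '' {j : Fin n | (j : ℕ) < i} := by
  ext x
  constructor
  · rintro ⟨j, rfl⟩
    exact ⟨Fin.castLE hin j, j.isLt, rfl⟩
  · rintro ⟨j, hj, rfl⟩
    exact ⟨⟨(j : ℕ), hj⟩, by simp [Fin.castLE, Fin.ext_iff]⟩

lemma finrank_sfil {n : ℕ} {e : Fin n → RatFunc K} (hli : LinearIndependent K e)
    {i : ℕ} (hin : i ≤ n) : Module.finrank K ↥(sfil e i) = i := by
  rw [sfil, ← range_castLE_eq hin e,
    finrank_span_eq_card (hli.comp (Fin.castLE hin) (Fin.castLE_injective hin)),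
    Fintype.card_fin]

open scoped Pointwise in
set_option maxHeartbeats 1600000 in
/-- Along the natural filtration, `dim S_i² ≥ dim S_{i-1}² + 2`, hence the
combinatorial genii are nondecreasing. -/
theorem statement3 (n : ℕ) (S : Submodule K (RatFunc K))
    (hdim : Module.finrank K ↥S = n)
    (p : Option K) (e : Fin n → RatFunc K)
    (hbasis : IsFilteredBasis (plval p) S e) :
    (∀ i : ℕ, 2 ≤ i → i ≤ n →
      Module.finrank K ↥(sfil e (i - 1) * sfil e (i - 1)) + 2 ≤
          Module.finrank K ↥(sfil e i * sfil e i) ∧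
        cgenus (sfil e (i - 1)) ≤ cgenus (sfil e i)) ∧
    ∀ i j : ℕ, 1 ≤ i → i ≤ j → j ≤ n → cgenus (sfil e i) ≤ cgenus (sfil e j) := by
  obtain ⟨hli, hspan, hanti⟩ := hbasis
  have hne : ∀ j, e j ≠ 0 := fun j => hli.ne_zero j
  have p1 : ∀ i : ℕ, 2 ≤ i → i ≤ n →
      Module.finrank K ↥(sfil e (i - 1) * sfil e (i - 1)) + 2 ≤
          Module.finrank K ↥(sfil e i * sfil e i) ∧
        cgenus (sfil e (i - 1)) ≤ cgenus (sfil e i) := by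
    intro i h2 hin
    set v : RatFunc K → ℤ := plval p with hv
    set i2 : Fin n := ⟨i - 2, by omega⟩ with hi2
    set i1 : Fin n := ⟨i - 1, by omega⟩ with hi1
    set a : ℤ := v (e i2) with ha
    set b : ℤ := v (e i1) with hb
    have hba : b < a := hanti (show i2 < i1 by rw [Fin.lt_def]; show i - 2 < i - 1; omega)
    set s : Set (RatFunc K) := e '' {j : Fin n | (j : ℕ) < i - 1} with hsdef
    set s' : Set (RatFunc K) := e '' {j : Fin n | (j : ℕ) < i} with hs'def
    have hs : ∀ x ∈ s, x ≠ 0 ∧ a ≤ v x := by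
      rintro x ⟨j, hj, rfl⟩
      refine ⟨hne j, ?_⟩
      have hj' : (j : ℕ) < i - 1 := hj
      exact hanti.antitone (show j ≤ i2 by rw [Fin.le_def]; show (j : ℕ) ≤ i - 2; omega)
    have hss : ∀ x ∈ s * s, x ≠ 0 ∧ a + a ≤ v x := by
      rintro x hx
      rcases Set.mem_mul.mp hx with ⟨y, hy, z, hz, rfl⟩
      obtain ⟨hy0, hya⟩ := hs y hy
      obtain ⟨hz0, hza⟩ := hs z hz
      exact ⟨mul_ne_zero hy0 hz0, by rw [hv, plval_mul p hy0 hz0]; exact add_le_add hya hza⟩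
    set z1 : RatFunc K := e i2 * e i1 with hz1def
    set z2 : RatFunc K := e i1 * e i1 with hz2def
    have hz1 : z1 ≠ 0 := mul_ne_zero (hne i2) (hne i1)
    have hz2 : z2 ≠ 0 := mul_ne_zero (hne i1) (hne i1)
    have hvz1 : v z1 = a + b := plval_mul p (hne i2) (hne i1)
    have hvz2 : v z2 = b + b := plval_mul p (hne i1) (hne i1)
    have hgen1 : ∀ x ∈ s * s ∪ {z1}, x ≠ 0 ∧ a + b ≤ v x := by
      rintro x (hx | hx)
      · obtain ⟨h0, hb'⟩ := hss x hx
        exact ⟨h0, le_trans (by omega) hb'⟩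
      · rcases hx with rfl
        exact ⟨hz1, le_of_eq hvz1.symm⟩
    have hTT : sfil e (i - 1) * sfil e (i - 1) = Submodule.span K (s * s) := by
      rw [sfil, Submodule.span_mul_span]
    set U1 : Submodule K (RatFunc K) := Submodule.span K (s * s ∪ {z1}) with hU1
    set U2 : Submodule K (RatFunc K) := Submodule.span K (s * s ∪ {z1, z2}) with hU2
    have hsfin : (s * s).Finite := Set.Finite.mul (Set.Finite.image e (Set.toFinite _))
      (Set.Finite.image e (Set.toFinite _))
    haveI : FiniteDimensional K ↥(Submodule.span K (s * s)) :=
      FiniteDimensional.span_of_finite K hsfin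
    haveI : FiniteDimensional K ↥U1 :=
      FiniteDimensional.span_of_finite K (hsfin.union (Set.finite_singleton _))
    haveI : FiniteDimensional K ↥U2 :=
      FiniteDimensional.span_of_finite K (hsfin.union
        ((Set.finite_singleton z2).insert z1))
    haveI : FiniteDimensional K ↥(sfil e i * sfil e i) := by
      rw [sfil, Submodule.span_mul_span]
      exact FiniteDimensional.span_of_finite K (Set.Finite.mul
        (Set.Finite.image e (Set.toFinite _)) (Set.Finite.image e (Set.toFinite _)))
    have hz1notin : z1 ∉ Submodule.span K (s * s) := by
      intro hmem
      have := plval_span_bound p hss z1 hmem hz1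
      rw [← hv, hvz1] at this
      omega
    have hz2notin : z2 ∉ U1 := by
      intro hmem
      have := plval_span_bound p hgen1 z2 hmem hz2
      rw [← hv, hvz2] at this
      omega
    have hlt1 : Submodule.span K (s * s) < U1 := by
      refine lt_of_le_of_ne (Submodule.span_mono Set.subset_union_left) ?_
      intro heq
      exact hz1notin (heq ▸ Submodule.subset_span (Or.inr rfl))
    have hlt2 : U1 < U2 := by
      refine lt_of_le_of_ne (Submodule.span_mono (Set.union_subset_union_right _
        (Set.singleton_subset_iff.mpr (Set.mem_insert _ _)))) ?_
      intro heq
      exact hz2notin (heq ▸ Submodule.subset_span (Or.inr (Set.mem_insert_of_mem _ rfl)))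
    have hmemsi : ∀ j : Fin n, (j : ℕ) < i → e j ∈ sfil e i :=
      fun j hj => Submodule.subset_span ⟨j, hj, rfl⟩
    have hU2le : U2 ≤ sfil e i * sfil e i := by
      rw [hU2, Submodule.span_le]
      rintro x (hx | hx)
      · rcases Set.mem_mul.mp hx with ⟨y, ⟨jy, hjy, rfl⟩, z, ⟨jz, hjz, rfl⟩, rfl⟩
        have hjy' : (jy : ℕ) < i - 1 := hjy
        have hjz' : (jz : ℕ) < i - 1 := hjz
        exact Submodule.mul_mem_mul (hmemsi jy (by omega)) (hmemsi jz (by omega))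
      · rcases hx with rfl | rfl
        · exact Submodule.mul_mem_mul (hmemsi i2 (show i - 2 < i by omega))
            (hmemsi i1 (show i - 1 < i by omega))
        · exact Submodule.mul_mem_mul (hmemsi i1 (show i - 1 < i by omega))
            (hmemsi i1 (show i - 1 < i by omega))
    have hd1 : Module.finrank K ↥(Submodule.span K (s * s)) < Module.finrank K ↥U1 :=
      Submodule.finrank_lt_finrank_of_lt hlt1
    have hd2 : Module.finrank K ↥U1 < Module.finrank K ↥U2 :=
      Submodule.finrank_lt_finrank_of_lt hlt2
    have hd3 : Module.finrank K ↥U2 ≤ Module.finrank K ↥(sfil e i * sfil e i) :=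
      Submodule.finrank_mono hU2le
    have hmain : Module.finrank K ↥(sfil e (i - 1) * sfil e (i - 1)) + 2 ≤
        Module.finrank K ↥(sfil e i * sfil e i) := by
      rw [hTT]; omega
    refine ⟨hmain, ?_⟩
    have hr1 : Module.finrank K ↥(sfil e (i - 1)) = i - 1 := finrank_sfil hli (by omega)
    have hr2 : Module.finrank K ↥(sfil e i) = i := finrank_sfil hli hin
    unfold cgenus
    rw [hr1, hr2]
    have : ((i - 1 : ℕ) : ℤ) = (i : ℤ) - 1 := by omega
    omega
  refine ⟨p1, ?_⟩
  intro i j h1i hij hjn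
  induction j with
  | zero => exact absurd hij (by omega)
  | succ m ih =>
    rcases Nat.lt_or_ge i (m + 1) with hlt | hge
    · have him : i ≤ m := by omega
      refine le_trans (ih him (by omega)) ?_
      have := (p1 (m + 1) (by omega) hjn).2
      simpa using this
    · have : i = m + 1 := by omega
      subst this
      exact le_rfl


end FFF
end
end

section
/- Let K be an algebraically closed field and F = K(x). Let S be a finite-dimensional K-subspace of F of dimension n with filtered basis (e_1, …, e_n) with respect to v_∞, natural filtration S_1 ⊂ … ⊂ S_n, and let 2 ≤ t ≤ n and 1 ≤ i ≤ t. (i) If deg(e_i·e_t) > max{deg(f) : f ∈ S_{t−1}², f ≠ 0}, then e_i·e_t ∉ S_{t−1}² + span_K(E_t ∖ {e_i·e_t}). (ii) If e_i·e_t ∈ S_{t−1}² + span_K(E_t ∖ {e_i·e_t}), then either there exists f_1 ∈ E_{t−1} with deg(f_1) = deg(e_i·e_t), or there exist f_1 ∈ E_{t−1} and f_2 ∈ E_t with f_1 ≠ f_2 and deg(f_1) = deg(f_2) > deg(e_i·e_t). -/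
open Polynomial

noncomputable section

/-!
The degree is minus the valuation at infinity, which is trivial on `K`. Hence if a nonzero `x`
is a `K`-linear combination of elements of `T`, either some element of `T` has the degree of `x`,
or the maximal degree occurring in the combination exceeds `deg x` and is attained twice, so
that the leading terms can cancel. Apply this to `x = e_i e_t` and `T = E_t ∖ {x}`, which
contains `E_{t-1}` unless `x ∈ E_{t-1}`. Since `a ↦ deg e_a` is injective, two products
`e_a e_t` of equal degree coincide, so an element of `T` of degree `deg x`, and one of any two
distinct elements of `T` of equal degree, lies in `E_{t-1}`. Part (i) follows from (ii) because
`E_{t-1} ⊆ S_{t-1}²`.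
-/

namespace Valuation

variable {R Γ₀ : Type*} [Ring R] [LinearOrderedCommMonoidWithZero Γ₀] (v : Valuation R Γ₀)

theorem exists_map_eq_map_sum_or_exists_ne_map_eq {ι : Type*} {s : Finset ι} (hs : s.Nonempty)
    (f : ι → R) :
    (∃ i ∈ s, v (f i) = v (∑ k ∈ s, f k)) ∨
      ∃ i ∈ s, ∃ j ∈ s, i ≠ j ∧ v (f i) = v (f j) ∧ v (∑ k ∈ s, f k) < v (f j) := by
  classical
  obtain ⟨j, hj, hmax⟩ := s.exists_max_image (fun i => v (f i)) hs
  by_cases hunique : ∀ i ∈ s \ {j}, v (f i) < v (f j)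
  · exact Or.inl ⟨j, hj, (v.map_sum_eq_of_lt hj hunique).symm⟩
  push Not at hunique
  obtain ⟨i, hi, hge⟩ := hunique
  rw [Finset.mem_sdiff, Finset.mem_singleton] at hi
  have heq : v (f i) = v (f j) := le_antisymm (hmax i hi.1) hge
  rcases (v.map_sum_le hmax).lt_or_eq with hlt | hsum
  · exact Or.inr ⟨i, hi.1, j, hj, hi.2, heq, hlt⟩
  · exact Or.inl ⟨j, hj, hsum.symm⟩

theorem exists_map_eq_or_exists_ne_map_eq_of_mem_span {A : Type*} [CommSemiring A] [Algebra A R]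
    [v.IsTrivialOn A] {T : Set R} {x : R} (hx : x ∈ Submodule.span A T) (hx0 : x ≠ 0) :
    (∃ f ∈ T, v f = v x) ∨ ∃ f ∈ T, ∃ g ∈ T, f ≠ g ∧ v f = v g ∧ v x < v g := by
  obtain ⟨c, hcT, rfl⟩ := Submodule.mem_span_set.mp hx
  have hsmul : ∀ f ∈ c.support, v (c f • f) = v f := fun f hf => by
    rw [Algebra.smul_def, map_mul, IsTrivialOn.eq_one _ (Finsupp.mem_support_iff.mp hf), one_mul]
  have hs : c.support.Nonempty := Finsupp.support_nonempty_iff.mpr (by rintro rfl; simp at hx0)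
  rcases v.exists_map_eq_map_sum_or_exists_ne_map_eq hs (fun f => c f • f) with
    ⟨f, hf, h⟩ | ⟨f, hf, g, hg, hfg, h, hlt⟩
  · exact Or.inl ⟨f, hcT hf, (hsmul f hf).symm.trans h⟩
  · rw [hsmul f hf, hsmul g hg] at h
    rw [hsmul g hg] at hlt
    exact Or.inr ⟨f, hcT hf, g, hcT hg, hfg, h, hlt⟩

end Valuation

namespace RatFunc

variable {K : Type*} [Field K]

theorem exists_intDegree_eq_or_exists_ne_intDegree_eq_of_mem_span {T : Set (RatFunc K)}
    (hT : 0 ∉ T) {x : RatFunc K} (hx : x ∈ Submodule.span K T) (hx0 : x ≠ 0) :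
    (∃ f ∈ T, f.intDegree = x.intDegree) ∨
      ∃ f ∈ T, ∃ g ∈ T, f ≠ g ∧ f.intDegree = g.intDegree ∧ x.intDegree < g.intDegree := by
  classical
  have hv : ∀ {y : RatFunc K}, y ≠ 0 → inftyValuation K y = WithZero.exp y.intDegree :=
    fun hy => inftyValuation_of_nonzero K hy
  have hT0 : ∀ {f}, f ∈ T → f ≠ 0 := fun hf h => hT (h ▸ hf)
  rcases (inftyValuation K).exists_map_eq_or_exists_ne_map_eq_of_mem_span hx hx0 with
    ⟨f, hf, h⟩ | ⟨f, hf, g, hg, hfg, h, hlt⟩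
  · rw [hv (hT0 hf), hv hx0, WithZero.exp_inj] at h
    exact Or.inl ⟨f, hf, h⟩
  · rw [hv (hT0 hf), hv (hT0 hg), WithZero.exp_inj] at h
    rw [hv hx0, hv (hT0 hg), WithZero.exp_lt_exp] at hlt
    exact Or.inr ⟨f, hf, g, hg, hfg, h, hlt⟩

end RatFunc

namespace FFF

open Function Submodule

variable {K : Type*} [Field K]

theorem eq_of_intDegree_mul_eq {ι : Type*} {e : ι → RatFunc K} (he : ∀ a, e a ≠ 0)
    (hdeg : Injective fun a => (e a).intDegree) {a b c : ι}
    (h : (e a * e c).intDegree = (e b * e c).intDegree) : a = b := by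
  rw [RatFunc.intDegree_mul (he a) (he c), RatFunc.intDegree_mul (he b) (he c)] at h
  exact hdeg (add_right_cancel h)

section Products

variable {ι : Type*} [PartialOrder ι] (e : ι → RatFunc K) (t : ι)

/-- The set `E_t` of the paper. -/
def prodsUpTo : Set (RatFunc K) :=
  {f | ∃ a b : ι, a ≤ t ∧ b ≤ t ∧ f = e a * e b}

/-- The set `E_{t-1}` of the paper. -/
def prodsBelow : Set (RatFunc K) :=
  {f | ∃ a b : ι, a < t ∧ b < t ∧ f = e a * e b}

theorem prodsBelow_subset_prodsUpTo : prodsBelow e t ⊆ prodsUpTo e t := by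
  rintro _ ⟨a, b, ha, hb, rfl⟩
  exact ⟨a, b, ha.le, hb.le, rfl⟩

variable {e t}

theorem mem_prodsBelow_or_exists_eq_mul_of_mem_prodsUpTo {f : RatFunc K}
    (hf : f ∈ prodsUpTo e t) : f ∈ prodsBelow e t ∨ ∃ a, f = e a * e t := by
  obtain ⟨a, b, ha, hb, rfl⟩ := hf
  rcases hb.lt_or_eq with hb | rfl
  · rcases ha.lt_or_eq with ha | rfl
    · exact Or.inl ⟨a, b, ha, hb, rfl⟩
    · exact Or.inr ⟨b, mul_comm _ _⟩
  · exact Or.inr ⟨a, rfl⟩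

variable (he : ∀ a, e a ≠ 0) (hdeg : Injective fun a => (e a).intDegree)
include he

theorem zero_notMem_prodsUpTo : (0 : RatFunc K) ∉ prodsUpTo e t := by
  rintro ⟨a, b, -, -, h⟩
  exact mul_ne_zero (he a) (he b) h.symm

include hdeg

theorem mem_prodsBelow_of_intDegree_eq {i : ι} {f : RatFunc K} (hf : f ∈ prodsUpTo e t)
    (hfx : f ≠ e i * e t) (hdf : f.intDegree = (e i * e t).intDegree) : f ∈ prodsBelow e t := by
  rcases mem_prodsBelow_or_exists_eq_mul_of_mem_prodsUpTo hf with hf | ⟨a, rfl⟩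
  · exact hf
  · exact absurd (by rw [eq_of_intDegree_mul_eq he hdeg hdf]) hfx

theorem exists_intDegree_of_mem_span_sup {i : ι}
    (hx : e i * e t ∈ span K (prodsBelow e t) ⊔ span K (prodsUpTo e t \ {e i * e t})) :
    (∃ f₁ ∈ prodsBelow e t, f₁.intDegree = (e i * e t).intDegree) ∨
      ∃ f₁ f₂, f₁ ∈ prodsBelow e t ∧ f₂ ∈ prodsUpTo e t ∧
        f₁ ≠ f₂ ∧ f₁.intDegree = f₂.intDegree ∧ (e i * e t).intDegree < f₂.intDegree := by
  by_cases hxE : e i * e t ∈ prodsBelow e t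
  · exact Or.inl ⟨_, hxE, rfl⟩
  have hsub : prodsBelow e t ⊆ prodsUpTo e t \ {e i * e t} := fun f hf =>
    ⟨prodsBelow_subset_prodsUpTo e t hf, fun h => hxE (h ▸ hf)⟩
  rw [sup_eq_right.2 (span_mono hsub)] at hx
  rcases RatFunc.exists_intDegree_eq_or_exists_ne_intDegree_eq_of_mem_span
      (fun h => zero_notMem_prodsUpTo he h.1) hx (mul_ne_zero (he i) (he t)) with
    ⟨f, ⟨hf, hfx⟩, hdf⟩ | ⟨f, ⟨hf, -⟩, g, ⟨hg, -⟩, hfg, hdfg, hlt⟩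
  · exact Or.inl ⟨f, mem_prodsBelow_of_intDegree_eq he hdeg hf hfx hdf, hdf⟩
  rcases mem_prodsBelow_or_exists_eq_mul_of_mem_prodsUpTo hf with hf' | ⟨a, rfl⟩
  · exact Or.inr ⟨f, g, hf', hg, hfg, hdfg, hlt⟩
  rcases mem_prodsBelow_or_exists_eq_mul_of_mem_prodsUpTo hg with hg' | ⟨b, rfl⟩
  · exact Or.inr ⟨g, e a * e t, hg', hf, hfg.symm, hdfg.symm, hdfg ▸ hlt⟩
  · exact absurd (by rw [eq_of_intDegree_mul_eq he hdeg hdfg]) hfg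

end Products

open scoped Pointwise in
theorem sfil_mul_sfil {n : ℕ} (e : Fin n → RatFunc K) (t : Fin n) :
    sfil e t * sfil e t = span K (prodsBelow e t) := by
  rw [sfil, span_mul_span]
  congr 1
  ext f
  simp only [Set.mem_mul, Set.mem_image, Set.mem_ofPred_eq, Fin.val_fin_lt, prodsBelow]
  constructor
  · rintro ⟨_, ⟨a, ha, rfl⟩, _, ⟨b, hb, rfl⟩, rfl⟩
    exact ⟨a, b, ha, hb, rfl⟩
  · rintro ⟨a, b, ha, hb, rfl⟩
    exact ⟨_, ⟨a, ha, rfl⟩, _, ⟨b, hb, rfl⟩, rfl⟩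

theorem IsFilteredBasis.injective_intDegree {n : ℕ} {S : Submodule K (RatFunc K)}
    {e : Fin n → RatFunc K} (h : IsFilteredBasis vInf S e) :
    Injective fun a => (e a).intDegree :=
  fun _ _ hab => h.2.2.injective (congrArg Neg.neg hab)

variable [IsAlgClosed K]

theorem statement7_general (n : ℕ) (S : Submodule K (RatFunc K))
    (e : Fin n → RatFunc K)
    (hbasis : IsFilteredBasis vInf S e)
    (i t : Fin n) :
    ((∀ f ∈ (sfil e (t : ℕ) * sfil e (t : ℕ) : Submodule K (RatFunc K)), f ≠ 0 →
        fdeg f < fdeg (e i * e t)) →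
      e i * e t ∉
        (sfil e (t : ℕ) * sfil e (t : ℕ) : Submodule K (RatFunc K)) ⊔
          Submodule.span K
            ({f : RatFunc K | ∃ a b : Fin n, a ≤ t ∧ b ≤ t ∧ f = e a * e b} \ {e i * e t})) ∧
    (e i * e t ∈
        (sfil e (t : ℕ) * sfil e (t : ℕ) : Submodule K (RatFunc K)) ⊔
          Submodule.span K
            ({f : RatFunc K | ∃ a b : Fin n, a ≤ t ∧ b ≤ t ∧ f = e a * e b} \ {e i * e t}) →
      (∃ f₁ : RatFunc K, (∃ a b : Fin n, a < t ∧ b < t ∧ f₁ = e a * e b) ∧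
          fdeg f₁ = fdeg (e i * e t)) ∨
      (∃ f₁ f₂ : RatFunc K, (∃ a b : Fin n, a < t ∧ b < t ∧ f₁ = e a * e b) ∧
          (∃ a b : Fin n, a ≤ t ∧ b ≤ t ∧ f₂ = e a * e b) ∧ f₁ ≠ f₂ ∧
          fdeg f₁ = fdeg f₂ ∧ fdeg (e i * e t) < fdeg f₂)) := by
  have he : ∀ a, e a ≠ 0 := hbasis.1.ne_zero
  rw [sfil_mul_sfil]
  have hii := exists_intDegree_of_mem_span_sup (t := t) (i := i) he hbasis.injective_intDegree
  refine ⟨fun hlt hx => ?_, hii⟩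
  obtain ⟨f, hf, hle⟩ : ∃ f ∈ prodsBelow e t, fdeg (e i * e t) ≤ fdeg f := by
    rcases hii hx with ⟨f, hf, h⟩ | ⟨f, g, hf, -, -, h, hgt⟩
    exacts [⟨f, hf, h.ge⟩, ⟨f, hf, (h ▸ hgt).le⟩]
  exact (hlt f (subset_span hf)
    (fun h0 => zero_notMem_prodsUpTo he (h0 ▸ prodsBelow_subset_prodsUpTo e t hf))).not_ge hle

/-- (Here `i t : Fin n` are the (paper indices minus one) of basis
vectors, so paper `2 ≤ t` reads `1 ≤ (t : ℕ)`, `S_{t-1} = sfil e (t : ℕ)`, `E_t` is the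
set of products `e a * e b` with `a, b ≤ t`, and `E_{t-1}` uses `a, b < t`.)
(i) If `deg (e_i e_t)` exceeds all degrees of nonzero elements of `S_{t-1}²` then
`e_i e_t ∉ S_{t-1}² + span (E_t \ {e_i e_t})`; (ii) if it does belong to that space,
then either some `f₁ ∈ E_{t-1}` has `deg f₁ = deg (e_i e_t)`, or there are distinct
`f₁ ∈ E_{t-1}`, `f₂ ∈ E_t` with `deg f₁ = deg f₂ > deg (e_i e_t)`. -/
theorem statement7 (n : ℕ) (S : Submodule K (RatFunc K))
    (hdim : Module.finrank K ↥S = n)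
    (e : Fin n → RatFunc K)
    (hbasis : IsFilteredBasis vInf S e)
    (i t : Fin n) (hit : i ≤ t) (ht : 1 ≤ (t : ℕ)) :
    ((∀ f ∈ (sfil e (t : ℕ) * sfil e (t : ℕ) : Submodule K (RatFunc K)), f ≠ 0 →
        fdeg f < fdeg (e i * e t)) →
      e i * e t ∉
        (sfil e (t : ℕ) * sfil e (t : ℕ) : Submodule K (RatFunc K)) ⊔
          Submodule.span K
            ({f : RatFunc K | ∃ a b : Fin n, a ≤ t ∧ b ≤ t ∧ f = e a * e b} \ {e i * e t})) ∧
    (e i * e t ∈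
        (sfil e (t : ℕ) * sfil e (t : ℕ) : Submodule K (RatFunc K)) ⊔
          Submodule.span K
            ({f : RatFunc K | ∃ a b : Fin n, a ≤ t ∧ b ≤ t ∧ f = e a * e b} \ {e i * e t}) →
      (∃ f₁ : RatFunc K, (∃ a b : Fin n, a < t ∧ b < t ∧ f₁ = e a * e b) ∧
          fdeg f₁ = fdeg (e i * e t)) ∨
      (∃ f₁ f₂ : RatFunc K, (∃ a b : Fin n, a < t ∧ b < t ∧ f₁ = e a * e b) ∧
          (∃ a b : Fin n, a ≤ t ∧ b ≤ t ∧ f₂ = e a * e b) ∧ f₁ ≠ f₂ ∧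
          fdeg f₁ = fdeg f₂ ∧ fdeg (e i * e t) < fdeg f₂)) :=
  statement7_general n S e hbasis i t

end FFF
end
end

section
/- Let K be an algebraically closed field and F = K(x). Let S be a K-subspace of F with dim_K S = n and K(S) = F, and let (e_1, …, e_n) be a super filtered basis of S with respect to v_∞, with natural filtration S_i = span_K(e_1, …, e_i) and combinatorial genii γ_i. Suppose γ_n ≥ 1, let t be the least index with γ_t ≥ 1, and assume t ≥ 4 and e_i = x^{i−1} for all 1 ≤ i ≤ t − 1. For 1 ≤ i ≤ n set M_i = Σ_{α ∈ K} max(0, −v_α(e_i)), and for 2 ≤ i ≤ n set Δ_i = deg(e_i) − deg(e_{i−1}) and μ_i = M_i − M_{i−1}. If t > Δ_j + μ_j for all 2 ≤ j ≤ n, then for every i with t − 1 ≤ i ≤ n one has L(T_i) ⊆ S_i², where T_i is the divisor with T_i(P_∞) = D_i(P_∞) + t − 2 and T_i(P_α) = D_i(P_α) for all α ∈ K. -/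
open Polynomial

noncomputable section

namespace FFF

variable {K : Type*} [Field K] [IsAlgClosed K]

/-!
Write `e_i = g_i / q_i` in lowest terms. The space `fractionsDegreeLE q_i (deg g_i + t - 2)` of
fractions `h / q_i` with `deg h ≤ deg g_i + t - 2` is a Riemann–Roch space containing `L(T_i)`,
and we show by induction on `i ≥ t - 1` that it lies in `S_i²`. Because the basis is super
filtered, the finite poles of the `e_i` only grow along the basis, so `q_i = q_{i-1} r` with `r`
coprime to `g_i`. Bézout then splits every numerator as `h = r a + g_i b` with `deg b ≤ t - 2`
and `deg a < deg g_i`, i.e. `h / q_i = a / q_{i-1} + e_i b`: the second term is a product of two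
elements of `S_i` since the `x^k`, `k ≤ t - 2`, lie in `S_{t-1}`, and the jump bound
`Δ_i + μ_i < t` is exactly what puts the first term into the space of step `i - 1`. The base
case `i = t - 1` says that a polynomial of degree `≤ 2(t - 2)` is a sum of products of two
polynomials of degree `≤ t - 2`.
-/

local notation "ι" => algebraMap K[X] (RatFunc K)

section

omit [IsAlgClosed K]

lemma exists_eq_mul_add_mul_of_isCoprime {r g : K[X]} (hco : IsCoprime r g)
    (hg : 0 < g.natDegree) {c : ℕ} (hr : r.natDegree ≤ c + 1) {h : K[X]}
    (hh : h.natDegree ≤ g.natDegree + c) :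
    ∃ a b : K[X], h = r * a + g * b ∧ a.natDegree < g.natDegree ∧ b.natDegree ≤ c := by
  have hg0 : g ≠ 0 := by rintro rfl; simp at hg
  have hr0 : r ≠ 0 := by
    rintro rfl
    exact hg.ne' (natDegree_eq_zero_of_isUnit (isCoprime_zero_left.mp hco))
  -- Divide `h` by `g`, then split the remainder `ρ = ρ (u r + v g)` after reducing `ρ v` mod `r`.
  obtain ⟨u, v, huv⟩ := hco
  have hdivg := EuclideanDomain.div_add_mod h g
  set ρ := h % g
  have hdivr := EuclideanDomain.div_add_mod (ρ * v) r
  set w := ρ * v % r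
  have hρ : ρ.natDegree < g.natDegree := natDegree_mod_lt h hg.ne'
  have hgw : (g * w).natDegree < g.natDegree + r.natDegree := by
    rcases eq_or_ne w 0 with hw | hw
    · simp only [hw, mul_zero, natDegree_zero]; omega
    have := natDegree_lt_natDegree hw (degree_mod_lt (ρ * v) hr0)
    exact natDegree_mul_le.trans_lt (by omega)
  have hq : (h / g).natDegree ≤ c := by
    rcases eq_or_ne (h / g) 0 with h0 | h0
    · simp [h0]
    have h1 : (g * (h / g)).natDegree ≤ g.natDegree + c := by
      rw [show g * (h / g) = h - ρ by linear_combination hdivg]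
      exact (natDegree_sub_le _ _).trans (max_le hh (by omega))
    rw [natDegree_mul hg0 h0] at h1
    omega
  obtain ⟨a, ha⟩ : ∃ a, a = ρ * u + g * (ρ * v / r) := ⟨_, rfl⟩
  have hra : r * a = ρ - g * w := by
    rw [ha]
    linear_combination g * hdivr + ρ * huv
  refine ⟨a, h / g + w, by linear_combination -hra - hdivg, ?_, ?_⟩
  · rcases eq_or_ne a 0 with rfl | ha0
    · exact hg
    have h1 : (r * a).natDegree < g.natDegree + r.natDegree := by
      rw [hra]
      exact (natDegree_sub_le _ _).trans_lt (max_lt (by omega) hgw)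
    rw [natDegree_mul hr0 ha0] at h1
    omega
  · refine (natDegree_add_le _ _).trans (max_le hq ?_)
    rcases eq_or_ne w 0 with hw | hw
    · simp [hw]
    have := natDegree_lt_natDegree hw (degree_mod_lt (ρ * v) hr0)
    omega

lemma smul_eq_algebraMap_C_mul (c : K) (f : RatFunc K) : c • f = ι (C c) * f := by
  rw [Algebra.smul_def, IsScalarTower.algebraMap_apply K K[X] (RatFunc K), algebraMap_eq]

lemma vA_div_algebraMap (α : K) {p q : K[X]} (hp : p ≠ 0) (hq : q ≠ 0) :
    vA α (ι p / ι q) = (rootMultiplicity α p : ℤ) - rootMultiplicity α q := by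
  set f := ι p / ι q
  have hf0 : f ≠ 0 := div_ne_zero (RatFunc.algebraMap_ne_zero hp) (RatFunc.algebraMap_ne_zero hq)
  have h := congrArg (rootMultiplicity α) ((RatFunc.num_mul_eq_mul_denom_iff hq).mpr rfl :
    f.num * q = p * f.denom)
  rw [rootMultiplicity_mul (mul_ne_zero (RatFunc.num_ne_zero hf0) hq),
    rootMultiplicity_mul (mul_ne_zero hp f.denom_ne_zero)] at h
  unfold vA
  omega

lemma intDegree_div_algebraMap {p q : K[X]} (hp : p ≠ 0) (hq : q ≠ 0) :
    (ι p / ι q).intDegree = (p.natDegree : ℤ) - q.natDegree := by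
  rw [RatFunc.intDegree_div (RatFunc.algebraMap_ne_zero hp) (RatFunc.algebraMap_ne_zero hq),
    RatFunc.intDegree_polynomial, RatFunc.intDegree_polynomial]

lemma rootMultiplicity_num_eq_zero_or_denom_eq_zero (f : RatFunc K) (α : K) :
    rootMultiplicity α f.num = 0 ∨ rootMultiplicity α f.denom = 0 := by
  by_contra! h
  have hdvd : ∀ p : K[X], rootMultiplicity α p ≠ 0 → X - C α ∣ p := fun p hp =>
    (dvd_pow_self _ hp).trans (pow_rootMultiplicity_dvd p α)
  exact not_isUnit_X_sub_C α
    ((RatFunc.isCoprime_num_denom f).isUnit_of_dvd' (hdvd _ h.1) (hdvd _ h.2))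

lemma rootMultiplicity_denom_eq (f : RatFunc K) (α : K) :
    (rootMultiplicity α f.denom : ℤ) = max 0 (-vA α f) := by
  unfold vA
  rcases rootMultiplicity_num_eq_zero_or_denom_eq_zero f α with h | h <;> simp [h]

lemma vA_smul (α : K) {c : K} (hc : c ≠ 0) (f : RatFunc K) : vA α (c • f) = vA α f := by
  rcases eq_or_ne f 0 with rfl | hf
  · rw [smul_zero]
  have hnum : C c * f.num ≠ 0 := mul_ne_zero (C_ne_zero.mpr hc) (RatFunc.num_ne_zero hf)
  have hcf : c • f = ι (C c * f.num) / ι f.denom := by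
    rw [map_mul, mul_div_assoc, RatFunc.num_div_denom, smul_eq_algebraMap_C_mul]
  rw [hcf, vA_div_algebraMap α hnum f.denom_ne_zero, rootMultiplicity_mul hnum,
    rootMultiplicity_C, zero_add, vA]

lemma min_vA_le_vA_add (α : K) {f g : RatFunc K} (hf : f ≠ 0) (hg : g ≠ 0) (hfg : f + g ≠ 0) :
    min (vA α f) (vA α g) ≤ vA α (f + g) := by
  set P := f.num * g.denom + g.num * f.denom
  have hP : f + g = ι P / ι (f.denom * g.denom) := by
    have hf' := RatFunc.algebraMap_ne_zero f.denom_ne_zero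
    have hg' := RatFunc.algebraMap_ne_zero g.denom_ne_zero
    conv_lhs => rw [← RatFunc.num_div_denom f, ← RatFunc.num_div_denom g]
    rw [div_add_div _ _ hf' hg', map_mul, map_add, map_mul, map_mul]
    ring
  have hq : f.denom * g.denom ≠ 0 := mul_ne_zero f.denom_ne_zero g.denom_ne_zero
  have hP0 : P ≠ 0 := by
    rintro h0
    rw [h0, map_zero, zero_div] at hP
    exact hfg hP
  have hadd : min (rootMultiplicity α (f.num * g.denom)) (rootMultiplicity α (g.num * f.denom))
      ≤ rootMultiplicity α P := rootMultiplicity_add α hP0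
  rw [hP, vA_div_algebraMap α hP0 hq, rootMultiplicity_mul hq]
  rw [rootMultiplicity_mul (mul_ne_zero (RatFunc.num_ne_zero hf) g.denom_ne_zero),
    rootMultiplicity_mul (mul_ne_zero (RatFunc.num_ne_zero hg) f.denom_ne_zero)] at hadd
  unfold vA
  omega

lemma le_vA_of_mem_span {J : Type*} (α : K) {e : J → RatFunc K} {m : ℤ}
    (he : ∀ j, m ≤ vA α (e j)) {s : RatFunc K} (hs : s ∈ Submodule.span K (Set.range e))
    (hs0 : s ≠ 0) : m ≤ vA α s := by
  induction hs using Submodule.span_induction with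
  | mem x hx => obtain ⟨j, rfl⟩ := hx; exact he j
  | zero => exact absurd rfl hs0
  | add x y _ _ hx hy =>
    rcases eq_or_ne x 0 with rfl | hx0
    · simpa using hy (by simpa using hs0)
    rcases eq_or_ne y 0 with rfl | hy0
    · simpa using hx (by simpa using hs0)
    exact (le_min (hx hx0) (hy hy0)).trans (min_vA_le_vA_add α hx0 hy0 hs0)
  | smul c x _ hx =>
    rw [vA_smul α (left_ne_zero_of_smul hs0)]
    exact hx (right_ne_zero_of_smul hs0)

lemma isLeast_vA_span {J : Type*} (α : K) {e : J → RatFunc K} (he : ∀ j, e j ≠ 0) {j₀ : J}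
    (hj₀ : ∀ j, vA α (e j₀) ≤ vA α (e j)) :
    IsLeast {d : ℤ | ∃ s ∈ Submodule.span K (Set.range e), s ≠ 0 ∧ vA α s = d} (vA α (e j₀)) :=
  ⟨⟨e j₀, Submodule.subset_span ⟨j₀, rfl⟩, he j₀, rfl⟩,
    fun _ ⟨_, hs, hs0, hd⟩ => hd ▸ le_vA_of_mem_span α hj₀ hs hs0⟩

def fractionsDegreeLE (q : K[X]) (N : ℕ) : Submodule K (RatFunc K) where
  carrier := {f | ∃ p : K[X], p.natDegree ≤ N ∧ ι p / ι q = f}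
  add_mem' := by
    rintro _ _ ⟨p₁, hp₁, rfl⟩ ⟨p₂, hp₂, rfl⟩
    exact ⟨p₁ + p₂, (natDegree_add_le _ _).trans (max_le hp₁ hp₂), by rw [map_add, add_div]⟩
  zero_mem' := ⟨0, natDegree_zero.trans_le (Nat.zero_le N), by rw [map_zero, zero_div]⟩
  smul_mem' := by
    rintro c _ ⟨p, hp, rfl⟩
    refine ⟨C c * p, natDegree_C_mul_le c p |>.trans hp, ?_⟩
    rw [map_mul, mul_div_assoc, smul_eq_algebraMap_C_mul]

lemma fractionsDegreeLE_one_le {W : Submodule K (RatFunc K)} {N : ℕ}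
    (hW : ∀ k ≤ N, (RatFunc.X : RatFunc K) ^ k ∈ W) : fractionsDegreeLE 1 N ≤ W := by
  rintro _ ⟨p, hp, rfl⟩
  rw [map_one, div_one, p.as_sum_range' (N + 1) (Nat.lt_succ_of_le hp), map_sum]
  refine Submodule.sum_mem _ fun k hk => ?_
  rw [← C_mul_X_pow_eq_monomial, map_mul, map_pow, RatFunc.algebraMap_X,
    ← smul_eq_algebraMap_C_mul]
  exact W.smul_mem _ (hW k (Nat.lt_succ_iff.mp (Finset.mem_range.mp hk)))

lemma fractionsDegreeLE_one_add_le_mul {W : Submodule K (RatFunc K)} {c : ℕ}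
    (hW : fractionsDegreeLE 1 c ≤ W) : fractionsDegreeLE 1 (c + c) ≤ W * W := by
  have hX : ∀ k ≤ c, (RatFunc.X : RatFunc K) ^ k ∈ W := fun k hk =>
    hW ⟨X ^ k, (natDegree_X_pow_le k).trans hk, by simp⟩
  refine fractionsDegreeLE_one_le fun k hk => ?_
  rw [show k = min k c + (k - min k c) by omega, pow_add]
  exact Submodule.mul_mem_mul (hX _ (min_le_right k c)) (hX _ (by omega))

lemma fractionsDegreeLE_le_mul_of_le {c : ℕ} {W W' : Submodule K (RatFunc K)} (hWW' : W ≤ W')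
    (hc : fractionsDegreeLE 1 c ≤ W') {f f' : RatFunc K} (hf' : f' ∈ W')
    (hdvd : f.denom ∣ f'.denom) (hdeg : f.intDegree < f'.intDegree)
    (hjump : f'.intDegree - f.intDegree + ((f'.denom.natDegree : ℤ) - f.denom.natDegree) < c + 2)
    (hf : fractionsDegreeLE f.denom (f.num.natDegree + c) ≤ W * W) :
    fractionsDegreeLE f'.denom (f'.num.natDegree + c) ≤ W' * W' := by
  rintro _ ⟨h, hh, rfl⟩
  obtain ⟨r, hr⟩ := hdvd
  have hr0 : r ≠ 0 := by rintro rfl; exact f'.denom_ne_zero (by simpa using hr)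
  have hco : IsCoprime r f'.num :=
    (RatFunc.isCoprime_num_denom f').symm.of_isCoprime_of_dvd_left (Dvd.intro_left _ hr.symm)
  have hdenom : f'.denom.natDegree = f.denom.natDegree + r.natDegree := by
    rw [hr, natDegree_mul f.denom_ne_zero hr0]
  simp only [RatFunc.intDegree] at hdeg hjump
  obtain ⟨a, b, rfl, ha, hb⟩ :=
    exists_eq_mul_add_mul_of_isCoprime hco (by omega) (c := c) (by omega) hh
  have hsplit : ι (r * a + f'.num * b) / ι f'.denom = ι a / ι f.denom + f' * ι b := by
    have hq := RatFunc.algebraMap_ne_zero f.denom_ne_zero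
    have hr' := RatFunc.algebraMap_ne_zero hr0
    conv_rhs => rw [← RatFunc.num_div_denom f']
    rw [hr]
    simp only [map_add, map_mul]
    field_simp
  rw [hsplit]
  exact add_mem (mul_le_mul' hWW' hWW' (hf ⟨a, by omega, rfl⟩))
    (Submodule.mul_mem_mul hf' (hc ⟨b, hb, by simp⟩))

lemma mem_fractionsDegreeLE_of_denom_dvd {q : K[X]} (hq : q ≠ 0) {N : ℕ} {f : RatFunc K}
    (hdvd : f.denom ∣ q) (hdeg : f.intDegree + q.natDegree ≤ N) : f ∈ fractionsDegreeLE q N := by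
  obtain ⟨s, hs⟩ := hdvd
  rcases eq_or_ne f 0 with rfl | hf0
  · exact zero_mem _
  have hs0 : s ≠ 0 := by rintro rfl; exact hq (by simpa using hs)
  refine ⟨f.num * s, ?_, ?_⟩
  · have h1 := congrArg natDegree hs
    rw [natDegree_mul f.denom_ne_zero hs0] at h1
    rw [natDegree_mul (RatFunc.num_ne_zero hf0) hs0]
    simp only [RatFunc.intDegree] at hdeg
    omega
  · rw [hs, map_mul, map_mul, mul_div_mul_right _ _ (RatFunc.algebraMap_ne_zero hs0),
      RatFunc.num_div_denom]

lemma sfil_mono {n : ℕ} (e : Fin n → RatFunc K) : Monotone (sfil e) := fun _ _ h =>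
  Submodule.span_mono (Set.image_mono fun _ hj => lt_of_lt_of_le hj h)

lemma mem_sfil {n : ℕ} (e : Fin n → RatFunc K) {j : Fin n} {i : ℕ} (hj : (j : ℕ) < i) :
    e j ∈ sfil e i :=
  Submodule.subset_span ⟨j, hj, rfl⟩

lemma sfil_succ_le_fractionsDegreeLE {n : ℕ} {e : Fin n → RatFunc K}
    (hdvd : ∀ j k : Fin n, j ≤ k → (e j).denom ∣ (e k).denom)
    (hdeg : Monotone fun j => (e j).intDegree) (j : Fin n) :
    sfil e (j + 1) ≤ fractionsDegreeLE (e j).denom (e j).num.natDegree := by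
  refine Submodule.span_le.mpr ?_
  rintro _ ⟨k, hk, rfl⟩
  have hkj : k ≤ j := Fin.le_def.mpr (Nat.lt_succ_iff.mp hk)
  refine mem_fractionsDegreeLE_of_denom_dvd (e j).denom_ne_zero (hdvd k j hkj) ?_
  have := hdeg hkj
  simp only [RatFunc.intDegree] at this ⊢
  omega

lemma fractionsDegreeLE_le_sfil_mul {n c : ℕ} {e : Fin n → RatFunc K}
    (hdvd : ∀ j k : Fin n, j ≤ k → (e j).denom ∣ (e k).denom)
    (hdeg : StrictMono fun j => (e j).intDegree)
    (hjump : ∀ j k : Fin n, (k : ℕ) + 1 = j →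
      (e j).intDegree - (e k).intDegree +
        ((e j).denom.natDegree - (e k).denom.natDegree : ℤ) < c + 2)
    (hX : ∀ j : Fin n, (j : ℕ) ≤ c → e j = RatFunc.X ^ (j : ℕ)) (j : Fin n) (hj : c ≤ j) :
    fractionsDegreeLE (e j).denom ((e j).num.natDegree + c) ≤ sfil e (j + 1) * sfil e (j + 1) := by
  obtain ⟨j, hjn⟩ := j
  simp only at hj
  have hpoly : fractionsDegreeLE 1 c ≤ sfil e (c + 1) := fractionsDegreeLE_one_le fun k hk => by
    rw [← hX ⟨k, by omega⟩ hk]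
    exact mem_sfil e (Nat.lt_succ_of_le hk)
  revert hjn
  induction j, hj using Nat.le_induction with
  | base =>
    intro hjn
    rw [hX ⟨c, hjn⟩ le_rfl, ← RatFunc.algebraMap_X, ← map_pow, RatFunc.num_algebraMap,
      RatFunc.denom_algebraMap, natDegree_X_pow]
    exact fractionsDegreeLE_one_add_le_mul hpoly
  | succ j hcj ih =>
    intro hjn
    exact fractionsDegreeLE_le_mul_of_le (sfil_mono e (Nat.le_succ _))
      (hpoly.trans (sfil_mono e (show c + 1 ≤ j + 1 + 1 by omega)))
      (mem_sfil e (Nat.lt_succ_self _))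
      (hdvd _ _ (Fin.le_def.mpr (Nat.le_succ j))) (hdeg (Fin.lt_def.mpr (Nat.lt_succ_self j)))
      (hjump _ _ rfl) (ih (by omega))

end

lemma dvd_of_rootMultiplicity_le {p q : K[X]} (hp : p ≠ 0)
    (h : ∀ α, rootMultiplicity α p ≤ rootMultiplicity α q) : p ∣ q := by
  classical
  refine (IsAlgClosed.splits p).dvd_of_roots_le_roots hp (Multiset.le_iff_count.mpr fun α => ?_)
  rw [count_roots, count_roots]
  exact h α

lemma denom_dvd_denom_of_vA_le {f g : RatFunc K} (h : ∀ α, vA α f < 0 → vA α g ≤ vA α f) :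
    f.denom ∣ g.denom := by
  refine dvd_of_rootMultiplicity_le f.denom_ne_zero fun α => ?_
  have hf := rootMultiplicity_denom_eq f α
  have hg := rootMultiplicity_denom_eq g α
  by_cases hα : vA α f < 0
  · have := h α hα
    omega
  · omega

lemma finsum_max_zero_neg_vA (f : RatFunc K) :
    ∑ᶠ α : K, max 0 (-vA α f) = f.denom.natDegree := by
  classical
  simp_rw [← rootMultiplicity_denom_eq, ← count_roots]
  rw [finsum_eq_sum_of_support_subset _ (s := f.denom.roots.toFinset) ?_, ← Nat.cast_sum,
    Multiset.toFinset_sum_count_eq, IsAlgClosed.card_roots_eq_natDegree]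
  intro α hα
  rw [Finset.mem_coe, Multiset.mem_toFinset]
  rw [Function.mem_support, Nat.cast_ne_zero] at hα
  exact Multiset.count_ne_zero.mp hα

lemma mem_fractionsDegreeLE_iff {q : K[X]} (hq : q ≠ 0) {N : ℕ} {f : RatFunc K} :
    f ∈ fractionsDegreeLE q N ↔
      f = 0 ∨ (∀ α, -(rootMultiplicity α q : ℤ) ≤ vA α f) ∧ f.intDegree + q.natDegree ≤ N := by
  constructor
  · rintro ⟨p, hp, rfl⟩
    rcases eq_or_ne p 0 with rfl | hp0
    · simp
    refine .inr ⟨fun α => ?_, ?_⟩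
    · rw [vA_div_algebraMap α hp0 hq]
      omega
    · rw [intDegree_div_algebraMap hp0 hq]
      omega
  · rintro (rfl | ⟨hv, hdeg⟩)
    · exact zero_mem _
    refine mem_fractionsDegreeLE_of_denom_dvd hq ?_ hdeg
    refine dvd_of_rootMultiplicity_le f.denom_ne_zero fun α => ?_
    have := rootMultiplicity_denom_eq f α
    have := hv α
    omega

lemma rrset_subset_fractionsDegreeLE {V : Submodule K (RatFunc K)} {q : K[X]} (hq : q ≠ 0)
    {N c : ℕ} (hV : V ≤ fractionsDegreeLE q N) {D T : Divisor K} (hD : IsMinDivisor V D)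
    (hT : T none = D none + c) (hTα : ∀ α, T (some α) = D (some α)) :
    RRset T ⊆ fractionsDegreeLE q (N + c) := by
  rintro f (rfl | hf)
  · exact zero_mem _
  have hbound : ∀ p, ∃ s, s ≠ 0 ∧ plval p s = -D p ∧
      (∀ α, -(rootMultiplicity α q : ℤ) ≤ vA α s) ∧ s.intDegree + q.natDegree ≤ N := by
    intro p
    obtain ⟨s, hs, hs0, hsp⟩ := (hD p).1
    exact ⟨s, hs0, hsp, ((mem_fractionsDegreeLE_iff hq).mp (hV hs)).resolve_left hs0⟩
  refine (mem_fractionsDegreeLE_iff hq).mpr (.inr ⟨fun α => ?_, ?_⟩)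
  · obtain ⟨s, -, hsp, hsv, -⟩ := hbound (some α)
    have := hf (some α)
    simp only [plval, Option.elim, hTα] at hsp this
    linarith [hsv α]
  · obtain ⟨s, -, hsp, -, hsdeg⟩ := hbound none
    have := hf none
    simp only [plval, Option.elim, vInf, hT] at hsp this
    omega

theorem statement19_general (n : ℕ) (S : Submodule K (RatFunc K))
    (e : Fin n → RatFunc K)
    (hlin : LinearIndependent K e)
    (hspan : Submodule.span K (Set.range e) = S)
    (hanti : StrictAnti fun i => vInf (e i))
    (hsuper : ∀ α : K, ∀ m : ℤ,
      IsLeast {d : ℤ | ∃ s ∈ S, s ≠ 0 ∧ vA α s = d} m → m < 0 →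
        (∀ i j : Fin n, i ≤ j → vA α (e j) ≤ vA α (e i)) ∧
        ∀ j : Fin n, (j : ℕ) + 1 = n → vA α (e j) = m)
    (t : ℕ)
    (ht4 : 4 ≤ t)
    (hx : ∀ j : Fin n, (j : ℕ) + 2 ≤ t → e j = RatFunc.X ^ (j : ℕ))
    (D : ℕ → Divisor K)
    (hD : ∀ i : ℕ, 1 ≤ i → i ≤ n → IsMinDivisor (sfil e i) (D i))
    (hkey : ∀ j k : Fin n, (k : ℕ) + 1 = (j : ℕ) →
      (fdeg (e j) - fdeg (e k)) +
        ((∑ᶠ α : K, max 0 (-(vA α (e j)))) - ∑ᶠ α : K, max 0 (-(vA α (e k)))) < (t : ℤ)) :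
    ∀ i : ℕ, t - 1 ≤ i → i ≤ n → ∀ T : Divisor K,
      T none = D i none + (t : ℤ) - 2 → (∀ α : K, T (some α) = D i (some α)) →
      RRset T ⊆ ((sfil e i * sfil e i : Submodule K (RatFunc K)) : Set (RatFunc K)) := by
  -- The minimum of `vA α` on `S` is attained on the basis, so `hsuper` applies at every pole.
  have hpoles (α : K) (j k : Fin n) (hjk : j ≤ k) (hj : vA α (e j) < 0) :
      vA α (e k) ≤ vA α (e j) := by
    have : Nonempty (Fin n) := ⟨j⟩
    obtain ⟨j₀, hj₀⟩ := Finite.exists_min fun j => vA α (e j)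
    have hleast := isLeast_vA_span α hlin.ne_zero hj₀
    rw [hspan] at hleast
    exact (hsuper α _ hleast ((hj₀ j).trans_lt hj)).1 j k hjk
  have hdvd (j k : Fin n) (hjk : j ≤ k) : (e j).denom ∣ (e k).denom :=
    denom_dvd_denom_of_vA_le (hpoles · j k hjk)
  have hdeg : StrictMono fun j => (e j).intDegree := fun j k hjk => by
    simpa [vInf] using hanti hjk
  intro i' hi hin T hT hTα
  obtain ⟨i, rfl⟩ : ∃ i, i' = i + 1 := ⟨i' - 1, by omega⟩
  have key := fractionsDegreeLE_le_sfil_mul (c := t - 2) hdvd hdeg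
    (fun j k hjk => by
      have := hkey j k hjk
      simp only [fdeg, finsum_max_zero_neg_vA] at this
      omega)
    (fun j hj => hx j (by omega)) ⟨i, by omega⟩ (by simp only; omega)
  exact (rrset_subset_fractionsDegreeLE (e _).denom_ne_zero
    (sfil_succ_le_fractionsDegreeLE hdvd hdeg.monotone ⟨i, by omega⟩) (hD _ (by omega) hin)
    (by simp only [hT]; omega) hTα).trans key

/-- Let `e` be a super filtered basis of `S` w.r.t. `v∞`, `γₙ ≥ 1`, `t`
the least index with `γ_t ≥ 1`, `t ≥ 4` and `e_i = x^(i-1)` for `i ≤ t - 1`. With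
`M_i` the number of finite poles of `e_i`, `Δ_i, μ_i` the jumps of degrees and of `M`,
if `t > Δ_j + μ_j` for all `2 ≤ j ≤ n`, then `L(T_i) ⊆ S_i²` for all `t - 1 ≤ i ≤ n`,
where `T_i` agrees with the minimal divisor `D_i` at the finite places and
`T_i(P∞) = D_i(P∞) + t - 2`. -/
theorem statement19 (n : ℕ) (S : Submodule K (RatFunc K))
    (hdim : Module.finrank K ↥S = n)
    (hgen : Kgen (S : Set (RatFunc K)) = ⊤)
    (e : Fin n → RatFunc K)
    (hlin : LinearIndependent K e)
    (hspan : Submodule.span K (Set.range e) = S)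
    (hanti : StrictAnti fun i => vInf (e i))
    (hsuper : ∀ α : K, ∀ m : ℤ,
      IsLeast {d : ℤ | ∃ s ∈ S, s ≠ 0 ∧ vA α s = d} m → m < 0 →
        (∀ i j : Fin n, i ≤ j → vA α (e j) ≤ vA α (e i)) ∧
        ∀ j : Fin n, (j : ℕ) + 1 = n → vA α (e j) = m)
    (hgn : 1 ≤ cgenus (sfil e n))
    (t : ℕ)
    (ht : IsLeast {i : ℕ | 1 ≤ i ∧ i ≤ n ∧ 1 ≤ cgenus (sfil e i)} t)
    (ht4 : 4 ≤ t)
    (hx : ∀ j : Fin n, (j : ℕ) + 2 ≤ t → e j = RatFunc.X ^ (j : ℕ))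
    (D : ℕ → Divisor K)
    (hD : ∀ i : ℕ, 1 ≤ i → i ≤ n → IsMinDivisor (sfil e i) (D i))
    (hkey : ∀ j k : Fin n, (k : ℕ) + 1 = (j : ℕ) →
      (fdeg (e j) - fdeg (e k)) +
        ((∑ᶠ α : K, max 0 (-(vA α (e j)))) - ∑ᶠ α : K, max 0 (-(vA α (e k)))) < (t : ℤ)) :
    ∀ i : ℕ, t - 1 ≤ i → i ≤ n → ∀ T : Divisor K,
      T none = D i none + (t : ℤ) - 2 → (∀ α : K, T (some α) = D i (some α)) →
      RRset T ⊆ ((sfil e i * sfil e i : Submodule K (RatFunc K)) : Set (RatFunc K)) :=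
  statement19_general n S e hlin hspan hanti hsuper t ht4 hx D hD hkey

end FFF
end
end
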